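/- Let R be a commutative ring and let 0 → M' → M → L → 0 be a short exact sequence of R-modules that is split, with L free of rank 1. Then for every i ≥ 1 there is an exact sequence 0 → Λ^i M' → Λ^i M → L ⊗_R Λ^{i−1} M' → 0, where the surjection sends m₁ ∧ ... ∧ m_i to Σ_j (−1)^{i−j} π(m_j) ⊗ (m₁ ∧ ... ∧ m̂_j ∧ ... ∧ m_i) computed via a splitting (and is independent of the choice of splitting). -/

import Mathlib

/-!
Put `φ = b* ∘ π : M → R` and `e = s (b)`, so that `f ∘ ρ = id - e φ` and `φ ∘ f = 0`. Up to the
sign `(-1)^m` and `L ≅ R`, the map is `Λ^m ρ ∘ ι_φ`, where `ι_φ` is contraction with `φ`; the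
displayed formula is the expansion of `ι_φ` on a wedge. Since `ι_φ` is an antiderivation,
`Λ(f ρ) x + e ∧ Λ(f ρ) (ι_φ x) = x` for every `x`. As `ι_φ ∘ Λf = Λf ∘ ι_{φ f} = 0`, this identity
gives exactness in the middle, and it shows that another retraction `ρ'` of `f` gives the same
map: `Λρ' ∘ ι_φ` kills `im Λf` and sends `e ∧ Λf y` to `y`. The latter also exhibits `e ∧ Λf (-)`
as a section, whence surjectivity; `ρ` is a retraction of `f`, whence injectivity.
-/

open scoped TensorProduct

noncomputable def wedge (R : Type*) [CommRing R] {M : Type*} [AddCommGroup M] [Module R M]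
    (n : ℕ) (v : Fin n → M) : ⋀[R]^n M :=
  ⟨ExteriorAlgebra.ιMulti R n v, ExteriorAlgebra.ιMulti_range R n (Set.mem_range_self _)⟩

noncomputable def extPowerMap {R : Type*} [CommRing R] {M N : Type*} [AddCommGroup M]
    [Module R M] [AddCommGroup N] [Module R N] (n : ℕ) (f : M →ₗ[R] N) :
    ⋀[R]^n M →ₗ[R] ⋀[R]^n N :=
  (ExteriorAlgebra.map f).toLinearMap.restrict (p := ⋀[R]^n M) (q := ⋀[R]^n N)
    (by
      intro x hx
      have h1 : Submodule.map (ExteriorAlgebra.map f).toLinearMap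
            ((LinearMap.range (ExteriorAlgebra.ι R (M := M))) ^ n)
          ≤ (LinearMap.range (ExteriorAlgebra.ι R (M := N))) ^ n := by
        rw [Submodule.map_pow]
        refine pow_le_pow_left' ?_ n
        rintro y ⟨z, hz, rfl⟩
        obtain ⟨w, rfl⟩ := hz
        exact ⟨f w, by simp⟩
      exact h1 ⟨x, hx, rfl⟩)

theorem neg_one_pow_mul_neg_one_pow_of_le {R : Type*} [Ring R] {m j : ℕ} (hj : j ≤ m) :
    (-1 : R) ^ m * (-1) ^ j = (-1) ^ (m - j) := by
  rw [← pow_add, show m + j = m - j + 2 * j by omega, pow_add, pow_mul, neg_one_sq, one_pow,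
    mul_one]

namespace ExteriorAlgebra

open CliffordAlgebra (contractLeft)

variable {R : Type*} [CommRing R] {M N : Type*} [AddCommGroup M] [Module R M]
  [AddCommGroup N] [Module R N]

theorem contractLeft_ιMulti (φ : Module.Dual R M) (n : ℕ) (v : Fin (n + 1) → M) :
    contractLeft φ (ιMulti R (n + 1) v) =
      ∑ j : Fin (n + 1), ((-1 : R) ^ (j : ℕ) * φ (v j)) • ιMulti R n (v ∘ j.succAbove) := by
  induction n with
  | zero => simp [ιMulti_succ_apply, Algebra.algebraMap_eq_smul_one]
  | succ n ih =>
    rw [ιMulti_succ_apply, CliffordAlgebra.contractLeft_ι_mul, ih, Finset.mul_sum,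
      Fin.sum_univ_succ (n := n + 1), sub_eq_add_neg, ← Finset.sum_neg_distrib]
    congr 1
    · simp [Matrix.vecTail, Function.comp_def]
    refine Finset.sum_congr rfl fun k _ => ?_
    rw [ιMulti_succ_apply, mul_smul_comm, ← neg_smul]
    simp [pow_succ, Matrix.vecTail, Function.comp_def, Fin.succ_succAbove_succ]

theorem contractLeft_map (f : M →ₗ[R] N) (φ : Module.Dual R N) (x : ExteriorAlgebra R M) :
    contractLeft φ (map f x) = map f (contractLeft (φ ∘ₗ f) x) := by
  induction x using CliffordAlgebra.left_induction with
  | algebraMap r => simp [CliffordAlgebra.contractLeft_algebraMap]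
  | add x y hx hy => simp only [map_add, hx, hy]
  | ι_mul x m hx =>
    rw [map_mul, map_apply_ι, CliffordAlgebra.contractLeft_ι_mul,
      CliffordAlgebra.contractLeft_ι_mul, hx, map_sub, map_smul, map_mul, map_apply_ι]
    rfl

theorem map_eq_add_ι_mul_map_contractLeft (τ : M →ₗ[R] M) (φ : Module.Dual R M) (u : M)
    (hτ : ∀ w, τ w = w + φ w • u) (x : ExteriorAlgebra R M) :
    map τ x = x + ι R u * map τ (contractLeft φ x) := by
  induction x using CliffordAlgebra.left_induction with
  | algebraMap r => simp [CliffordAlgebra.contractLeft_algebraMap]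
  | add x y hx hy => simp only [map_add, hx, hy, mul_add]; abel
  | ι_mul x m hx =>
    change map τ (ι R m * x) = ι R m * x + ι R u * map τ (contractLeft φ (ι R m * x))
    have hτm : map τ (ι R m) = ι R m + φ m • ι R u := by rw [map_apply_ι, hτ, map_add, map_smul]
    have huu (y : ExteriorAlgebra R M) : ι R u * (ι R u * y) = 0 := by
      rw [← mul_assoc, ι_sq_zero, zero_mul]
    have hum (y : ExteriorAlgebra R M) : ι R u * (ι R m * y) = -(ι R m * (ι R u * y)) := by
      rw [← mul_assoc, ← mul_assoc, eq_neg_of_add_eq_zero_left (ι_add_mul_swap u m), neg_mul]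
    rw [map_mul, hτm, CliffordAlgebra.contractLeft_ι_mul, map_sub, map_smul, map_mul, hτm, hx]
    simp only [add_mul, mul_add, mul_sub, smul_mul_assoc, mul_smul_comm, huu, hum, smul_zero,
      add_zero]
    abel

section Split

variable {M' : Type*} [AddCommGroup M'] [Module R M']
  {f : M' →ₗ[R] M} {ρ : M →ₗ[R] M'} {φ : Module.Dual R M} {e : M}

theorem contractLeft_map_eq_zero (hφf : φ ∘ₗ f = 0) (x : ExteriorAlgebra R M') :
    contractLeft φ (map f x) = 0 := by
  rw [contractLeft_map, hφf, map_zero, LinearMap.zero_apply, map_zero]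

theorem eq_map_map_add_ι_mul_map_map_contractLeft (hfρ : ∀ w, f (ρ w) + φ w • e = w)
    (x : ExteriorAlgebra R M) :
    x = map f (map ρ x) + ι R e * map f (map ρ (contractLeft φ x)) := by
  have hτ (w : M) : (f ∘ₗ ρ) w = w + φ w • (-e) := by
    rw [LinearMap.comp_apply, smul_neg, ← sub_eq_add_neg, eq_sub_iff_add_eq, hfρ]
  rw [← AlgHom.comp_apply, map_comp_map, ← AlgHom.comp_apply, map_comp_map,
    map_eq_add_ι_mul_map_contractLeft _ φ _ hτ x, map_neg, neg_mul, neg_add_cancel_right]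

theorem map_contractLeft_ι_mul_map (hρf : ρ ∘ₗ f = .id) (hφf : φ ∘ₗ f = 0) (hφe : φ e = 1)
    (y : ExteriorAlgebra R M') :
    map ρ (contractLeft φ (ι R e * map f y)) = y := by
  rw [CliffordAlgebra.contractLeft_ι_mul, contractLeft_map_eq_zero hφf, mul_zero, sub_zero, hφe,
    one_smul, ← AlgHom.comp_apply, map_comp_map, hρf, map_id, AlgHom.id_apply]

theorem map_contractLeft_eq_of_comp_eq_id {ρ' : M →ₗ[R] M'} (hρ'f : ρ' ∘ₗ f = .id)
    (hφf : φ ∘ₗ f = 0) (hφe : φ e = 1) (hfρ : ∀ w, f (ρ w) + φ w • e = w)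
    (x : ExteriorAlgebra R M) :
    map ρ' (contractLeft φ x) = map ρ (contractLeft φ x) := by
  conv_lhs => rw [eq_map_map_add_ι_mul_map_map_contractLeft hfρ x]
  rw [map_add, contractLeft_map_eq_zero hφf, zero_add, map_contractLeft_ι_mul_map hρ'f hφf hφe]

end Split

theorem contractLeft_mem_exteriorPower (φ : Module.Dual R M) {n : ℕ} {x : ExteriorAlgebra R M}
    (hx : x ∈ ⋀[R]^(n + 1) M) : contractLeft φ x ∈ ⋀[R]^n M := by
  rw [← ιMulti_span_fixedDegree] at hx
  induction hx using Submodule.span_induction with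
  | mem x hx =>
    obtain ⟨v, rfl⟩ := hx
    rw [contractLeft_ιMulti]
    exact Submodule.sum_mem _ fun j _ => Submodule.smul_mem _ _ (ιMulti_range R n ⟨_, rfl⟩)
  | zero => simp
  | add x y _ _ hx hy => simpa using Submodule.add_mem _ hx hy
  | smul r x _ hx => simpa using Submodule.smul_mem _ r hx

theorem ι_mul_mem_exteriorPower (e : M) {n : ℕ} {x : ExteriorAlgebra R M}
    (hx : x ∈ ⋀[R]^n M) : ι R e * x ∈ ⋀[R]^(n + 1) M := by
  rw [exteriorPower, pow_succ']
  exact Submodule.mul_mem_mul (LinearMap.mem_range_self _ e) hx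

end ExteriorAlgebra
namespace exteriorPower

variable {R : Type*} [CommRing R] {M : Type*} [AddCommGroup M] [Module R M]

noncomputable def contractLeft (φ : Module.Dual R M) (n : ℕ) :
    ⋀[R]^(n + 1) M →ₗ[R] ⋀[R]^n M :=
  (CliffordAlgebra.contractLeft φ).restrict fun _ =>
    ExteriorAlgebra.contractLeft_mem_exteriorPower φ

theorem contractLeft_wedge (φ : Module.Dual R M) (n : ℕ) (v : Fin (n + 1) → M) :
    contractLeft φ n (wedge R (n + 1) v) =
      ∑ j : Fin (n + 1), ((-1 : R) ^ (j : ℕ) * φ (v j)) • wedge R n (v ∘ j.succAbove) :=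
  Subtype.ext <| by
    simpa [contractLeft, wedge] using ExteriorAlgebra.contractLeft_ιMulti φ n v

end exteriorPower

section ExtPowerMap

variable {R : Type*} [CommRing R] {M N : Type*} [AddCommGroup M] [Module R M]
  [AddCommGroup N] [Module R N]

theorem extPowerMap_wedge (n : ℕ) (f : M →ₗ[R] N) (v : Fin n → M) :
    extPowerMap n f (wedge R n v) = wedge R n (f ∘ v) :=
  Subtype.ext (ExteriorAlgebra.map_apply_ιMulti f v)

theorem extPowerMap_eq_map (n : ℕ) (f : M →ₗ[R] N) : extPowerMap n f = exteriorPower.map n f := by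
  ext v
  exact congrArg Subtype.val
    ((extPowerMap_wedge n f v).trans (exteriorPower.map_apply_ιMulti f v).symm)

end ExtPowerMap

section SplitExact

open ExteriorAlgebra

variable {R : Type*} [CommRing R] {M M' : Type*} [AddCommGroup M] [Module R M]
  [AddCommGroup M'] [Module R M'] {f : M' →ₗ[R] M} {ρ : M →ₗ[R] M'} {φ : Module.Dual R M}
  {e : M}

theorem extPowerMap_comp_contractLeft_eq_of_comp_eq_id {ρ' : M →ₗ[R] M'}
    (hρ'f : ρ' ∘ₗ f = .id) (hφf : φ ∘ₗ f = 0) (hφe : φ e = 1)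
    (hfρ : ∀ w, f (ρ w) + φ w • e = w) (n : ℕ) :
    extPowerMap n ρ' ∘ₗ exteriorPower.contractLeft φ n =
      extPowerMap n ρ ∘ₗ exteriorPower.contractLeft φ n :=
  LinearMap.ext fun x => Subtype.ext <| map_contractLeft_eq_of_comp_eq_id hρ'f hφf hφe hfρ x

theorem exact_extPowerMap_extPowerMap_comp_contractLeft (hφf : φ ∘ₗ f = 0)
    (hfρ : ∀ w, f (ρ w) + φ w • e = w) (n : ℕ) :
    Function.Exact (extPowerMap (n + 1) f) (extPowerMap n ρ ∘ₗ exteriorPower.contractLeft φ n) := by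
  intro x
  constructor
  · intro hx
    refine ⟨extPowerMap (n + 1) ρ x, Subtype.ext ?_⟩
    have hx' : map ρ (CliffordAlgebra.contractLeft φ (x : ExteriorAlgebra R M)) = 0 :=
      congrArg Subtype.val hx
    conv_rhs => rw [eq_map_map_add_ι_mul_map_map_contractLeft hfρ (x : ExteriorAlgebra R M), hx']
    rw [map_zero, mul_zero, add_zero]
    rfl
  · rintro ⟨y, rfl⟩
    exact Subtype.ext <| by
      simp [extPowerMap, exteriorPower.contractLeft, contractLeft_map_eq_zero hφf]

theorem surjective_extPowerMap_comp_contractLeft (hρf : ρ ∘ₗ f = .id) (hφf : φ ∘ₗ f = 0)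
    (hφe : φ e = 1) (n : ℕ) :
    Function.Surjective (extPowerMap n ρ ∘ₗ exteriorPower.contractLeft φ n) := fun w =>
  ⟨⟨ι R e * map f w, ι_mul_mem_exteriorPower e (extPowerMap n f w).2⟩,
    Subtype.ext (map_contractLeft_ι_mul_map hρf hφf hφe w)⟩

end SplitExact

section

variable {R : Type*} [CommRing R] {M M' L : Type*} [AddCommGroup M] [Module R M]
  [AddCommGroup M'] [Module R M'] [AddCommGroup L] [Module R L]
  {f : M' →ₗ[R] M} {π : M →ₗ[R] L} {s : L →ₗ[R] M}

theorem Function.Exact.exists_apply_eq_sub (hexact : Function.Exact f π)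
    (hf : Function.Injective f) (hs : π ∘ₗ s = .id) :
    ∃ ρ : M →ₗ[R] M', ∀ x, f (ρ x) = x - s (π x) := by
  have hmem : ∀ x, (LinearMap.id - s ∘ₗ π : M →ₗ[R] M) x ∈ LinearMap.range f := fun x =>
    (hexact _).mp (by simp [← LinearMap.comp_apply π s, hs])
  exact ⟨(LinearEquiv.ofInjective f hf).symm.toLinearMap ∘ₗ
    (LinearMap.id - s ∘ₗ π).codRestrict _ hmem, fun x => by simp⟩

theorem Function.Exact.comp_eq_id_of_apply_eq_sub (hexact : Function.Exact f π)
    (hf : Function.Injective f) {ρ : M →ₗ[R] M'} (hρ : ∀ x, f (ρ x) = x - s (π x)) :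
    ρ ∘ₗ f = .id :=
  LinearMap.ext fun y => hf <| by simp [hρ, hexact.apply_apply_eq_zero]

end

namespace Module.Basis

variable {R L ι : Type*} [CommRing R] [AddCommGroup L] [Module R L] [Unique ι]

noncomputable def tensorEquivOfUnique (b : Basis ι R L) (N : Type*) [AddCommGroup N]
    [Module R N] : L ⊗[R] N ≃ₗ[R] N :=
  TensorProduct.congr (b.equivFun ≪≫ₗ LinearEquiv.funUnique ι R R) (.refl R N) ≪≫ₗ
    TensorProduct.lid R N

theorem tensorEquivOfUnique_symm_apply (b : Basis ι R L) {N : Type*} [AddCommGroup N]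
    [Module R N] (x : N) : (b.tensorEquivOfUnique N).symm x = b default ⊗ₜ x := by
  rw [LinearEquiv.symm_apply_eq]
  simp [tensorEquivOfUnique]

end Module.Basis

namespace exteriorPower

variable {R : Type*} [CommRing R] {M M' L : Type*} [AddCommGroup M] [Module R M]
  [AddCommGroup M'] [Module R M'] [AddCommGroup L] [Module R L]

noncomputable def tensorContract (b : Module.Basis (Fin 1) R L) (φ : Module.Dual R M)
    (ρ : M →ₗ[R] M') (m : ℕ) : ⋀[R]^(m + 1) M →ₗ[R] L ⊗[R] ⋀[R]^m M' :=
  (LinearEquiv.smulOfUnit ((-1) ^ m) ≪≫ₗ (b.tensorEquivOfUnique _).symm).toLinearMap ∘ₗ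
    extPowerMap m ρ ∘ₗ contractLeft φ m

theorem tensorContract_wedge (b : Module.Basis (Fin 1) R L) {φ : Module.Dual R M}
    {π : M →ₗ[R] L} (hπ : ∀ x, φ x • b 0 = π x) (ρ : M →ₗ[R] M') (m : ℕ)
    (v : Fin (m + 1) → M) :
    tensorContract b φ ρ m (wedge R (m + 1) v) =
      ∑ j : Fin (m + 1), ((-1 : ℤ) ^ (m - (j : ℕ))) •
        (π (v j) ⊗ₜ[R] wedge R m (fun l => ρ (v (j.succAbove l)))) := by
  rw [tensorContract, LinearMap.comp_apply, LinearMap.comp_apply, contractLeft_wedge, map_sum,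
    map_sum]
  refine Finset.sum_congr rfl fun j _ => ?_
  rw [map_smul, map_smul, extPowerMap_wedge, ← hπ, ← TensorProduct.smul_tmul',
    ← Int.cast_smul_eq_zsmul R, smul_smul]
  simp only [LinearEquiv.coe_coe, LinearEquiv.trans_apply, LinearEquiv.smulOfUnit,
    DistribMulAction.toLinearEquiv_apply, Units.smul_def,
    Module.Basis.tensorEquivOfUnique_symm_apply]
  push_cast
  rw [TensorProduct.tmul_smul, smul_smul, Fin.default_eq_zero,
    ← neg_one_pow_mul_neg_one_pow_of_le (Fin.is_le j)]
  congr 1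
  ring

section

variable {b : Module.Basis (Fin 1) R L} {f : M' →ₗ[R] M} {ρ : M →ₗ[R] M'}
  {φ : Module.Dual R M} {e : M}

theorem tensorContract_eq_of_comp_eq_id {ρ' : M →ₗ[R] M'} (hρ'f : ρ' ∘ₗ f = .id)
    (hφf : φ ∘ₗ f = 0) (hφe : φ e = 1) (hfρ : ∀ w, f (ρ w) + φ w • e = w) (m : ℕ) :
    tensorContract b φ ρ' m = tensorContract b φ ρ m := by
  rw [tensorContract, extPowerMap_comp_contractLeft_eq_of_comp_eq_id hρ'f hφf hφe hfρ,
    tensorContract]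

theorem exact_extPowerMap_tensorContract (hφf : φ ∘ₗ f = 0)
    (hfρ : ∀ w, f (ρ w) + φ w • e = w) (m : ℕ) :
    Function.Exact (extPowerMap (m + 1) f) (tensorContract b φ ρ m) :=
  LinearEquiv.postcomp_exact_iff_exact.mpr
    (exact_extPowerMap_extPowerMap_comp_contractLeft hφf hfρ m)

theorem surjective_tensorContract (hρf : ρ ∘ₗ f = .id) (hφf : φ ∘ₗ f = 0) (hφe : φ e = 1)
    (m : ℕ) : Function.Surjective (tensorContract b φ ρ m) := by
  rw [tensorContract, LinearMap.coe_comp]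
  exact (LinearEquiv.surjective _).comp (surjective_extPowerMap_comp_contractLeft hρf hφf hφe m)

end

end exteriorPower

theorem stmt_11_general {R M M' L : Type*} [CommRing R]
    [AddCommGroup M] [Module R M] [AddCommGroup M'] [Module R M']
    [AddCommGroup L] [Module R L]
    (bL : Module.Basis (Fin 1) R L)
    (f : M' →ₗ[R] M) (π : M →ₗ[R] L)
    (hf : Function.Injective f)
    (hexact : Function.Exact f π)
    (hsplit : ∃ s : L →ₗ[R] M, π ∘ₗ s = LinearMap.id)
    (m : ℕ) :
    ∃ g : ⋀[R]^(m + 1) M →ₗ[R] L ⊗[R] ⋀[R]^m M',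
      (∀ (s : L →ₗ[R] M) (ρ : M →ₗ[R] M'),
          π ∘ₗ s = LinearMap.id →
          (∀ x : M, f (ρ x) = x - s (π x)) →
          ∀ v : Fin (m + 1) → M,
            g (wedge R (m + 1) v)
              = ∑ j : Fin (m + 1),
                  ((-1 : ℤ) ^ (m - (j : ℕ))) •
                    (π (v j) ⊗ₜ[R] wedge R m (fun l => ρ (v (j.succAbove l))))) ∧
      Function.Injective (extPowerMap (m + 1) f) ∧
      Function.Exact (extPowerMap (m + 1) f) g ∧
      Function.Surjective g := by
  obtain ⟨s, hs⟩ := hsplit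
  obtain ⟨ρ, hρ⟩ := hexact.exists_apply_eq_sub hf hs
  set φ : Module.Dual R M := bL.coord 0 ∘ₗ π
  have hπ (x : M) : φ x • bL 0 = π x := by simpa [φ] using bL.sum_repr (π x)
  have hφf : φ ∘ₗ f = 0 := by ext; simp [φ, hexact.apply_apply_eq_zero]
  have hφe : φ (s (bL 0)) = 1 := by simp [φ, ← LinearMap.comp_apply π s, hs]
  have hfρ (w : M) : f (ρ w) + φ w • s (bL 0) = w := by rw [hρ, ← map_smul, hπ, sub_add_cancel]
  have hρf := hexact.comp_eq_id_of_apply_eq_sub hf hρ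
  refine ⟨exteriorPower.tensorContract bL φ ρ m, fun s' ρ' _ hρ' v => ?_,
    extPowerMap_eq_map (m + 1) f ▸ exteriorPower.map_injective ρ hρf,
    exteriorPower.exact_extPowerMap_tensorContract hφf hfρ m,
    exteriorPower.surjective_tensorContract hρf hφf hφe m⟩
  rw [← exteriorPower.tensorContract_eq_of_comp_eq_id
    (hexact.comp_eq_id_of_apply_eq_sub hf hρ') hφf hφe hfρ m,
    exteriorPower.tensorContract_wedge bL hπ]

/-- Given a split short exact sequence `0 → M' → M → L → 0` of `R`-modules with `L` free of
rank one, for every `i = m + 1 ≥ 1` there is an exact sequence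
`0 → Λ^i M' → Λ^i M → L ⊗ Λ^{i−1} M' → 0`, where the surjection sends
`m₁ ∧ ... ∧ m_i` to `Σ_j (−1)^{i−j} π(m_j) ⊗ (m₁ ∧ ... ∧ m̂_j ∧ ... ∧ m_i)` computed via
any splitting (and is independent of the choice of splitting). -/
theorem stmt_11 {R M M' L : Type*} [CommRing R]
    [AddCommGroup M] [Module R M] [AddCommGroup M'] [Module R M']
    [AddCommGroup L] [Module R L]
    (bL : Module.Basis (Fin 1) R L)
    (f : M' →ₗ[R] M) (π : M →ₗ[R] L)
    (hf : Function.Injective f) (hπ : Function.Surjective π)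
    (hexact : Function.Exact f π)
    (hsplit : ∃ s : L →ₗ[R] M, π ∘ₗ s = LinearMap.id)
    (m : ℕ) :
    ∃ g : ⋀[R]^(m + 1) M →ₗ[R] L ⊗[R] ⋀[R]^m M',
      (∀ (s : L →ₗ[R] M) (ρ : M →ₗ[R] M'),
          π ∘ₗ s = LinearMap.id →
          (∀ x : M, f (ρ x) = x - s (π x)) →
          ∀ v : Fin (m + 1) → M,
            g (wedge R (m + 1) v)
              = ∑ j : Fin (m + 1),
                  ((-1 : ℤ) ^ (m - (j : ℕ))) •
                    (π (v j) ⊗ₜ[R] wedge R m (fun l => ρ (v (j.succAbove l))))) ∧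
      Function.Injective (extPowerMap (m + 1) f) ∧
      Function.Exact (extPowerMap (m + 1) f) g ∧
      Function.Surjective g :=
  stmt_11_general bL f π hf hexact hsplit m
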